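/- Let g : E → ℝ be a real positive definite function on a group E with g(0) = 1 and suppose g(w) ≤ ε for some w ∈ E and ε ≥ 0. If y ∈ E satisfies 2^k · y = w for some natural number k, then g(y) ≤ 1 − (1 − ε)/4^k. -/

import Mathlib

/-- A real-valued function `g : E → ℝ` on an additive group is positive definite if for
every `k` and every `x_1, …, x_k ∈ E`, the matrix `(g (x i - x j))` is positive
semidefinite. -/
def IsPosDefFnReal {E : Type*} [AddGroup E] (g : E → ℝ) : Prop :=
  ∀ (k : ℕ) (x : Fin k → E),
    (Matrix.of fun i j => g (x i - x j)).PosSemidef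

/-!
Testing the positive semidefinite matrix `(g (xᵢ - xⱼ))` at the points `0, y, 2 • y` against the
vector `(1, -2, 1)` gives `g 0 - g (2 • y) ≤ 4 * (g 0 - g y)`, using that `g` is even. Iterating
`k` times, `1 - ε ≤ 1 - g w ≤ 4 ^ k * (1 - g y)`.
-/

namespace IsPosDefFnReal

variable {E : Type*} [AddGroup E] {g : E → ℝ}

theorem apply_neg (hg : IsPosDefFnReal g) (x : E) : g (-x) = g x := by
  have h := congrFun₂ (hg 2 ![0, x]).isHermitian 1 0
  simpa using h

theorem four_mul_apply_le (hg : IsPosDefFnReal g) (y : E) :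
    4 * g y ≤ 3 * g 0 + g (2 • y) := by
  have h := (hg 3 ![0, y, 2 • y]).dotProduct_mulVec_nonneg ![1, -2, 1]
  have hy : y - 2 • y = -y := by rw [two_nsmul, sub_eq_add_neg, neg_add_rev, add_neg_cancel_left]
  have hy' : 2 • y - y = y := by rw [two_nsmul, add_sub_cancel_right]
  simp only [dotProduct, Matrix.mulVec, Fin.sum_univ_three, Matrix.cons_val_zero,
    Matrix.cons_val_one, Matrix.cons_val_two, Matrix.tail_cons, Matrix.head_cons,
    Matrix.of_apply, sub_self, sub_zero, zero_sub, hy, hy', hg.apply_neg,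
    Pi.star_apply, star_trivial] at h
  linarith

theorem sub_apply_two_pow_nsmul_le (hg : IsPosDefFnReal g) (y : E) (k : ℕ) :
    g 0 - g (2 ^ k • y) ≤ 4 ^ k * (g 0 - g y) := by
  induction k generalizing y with
  | zero => simp
  | succ k ih =>
    calc g 0 - g (2 ^ (k + 1) • y) = g 0 - g (2 ^ k • 2 • y) := by rw [pow_succ', mul_nsmul]
      _ ≤ 4 ^ k * (g 0 - g (2 • y)) := ih (2 • y)
      _ ≤ 4 ^ k * (4 * (g 0 - g y)) := by
        gcongr
        linarith [hg.four_mul_apply_le y]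
      _ = 4 ^ (k + 1) * (g 0 - g y) := by ring

end IsPosDefFnReal

theorem pd_fn_iterated_halving_general {E : Type*} [AddGroup E] (g : E → ℝ)
    (hg : IsPosDefFnReal g) (h0 : g 0 = 1) (w y : E) (ε : ℝ)
    (hw : g w ≤ ε) (k : ℕ) (hy : (2 ^ k : ℕ) • y = w) :
    g y ≤ 1 - (1 - ε) / 4 ^ k := by
  have hgap := hg.sub_apply_two_pow_nsmul_le y k
  rw [hy, h0] at hgap
  have hpos : (0 : ℝ) < 4 ^ k := by positivity
  have : (1 - ε) / 4 ^ k ≤ 1 - g y := (div_le_iff₀' hpos).2 (by linarith)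
  linarith

theorem pd_fn_iterated_halving {E : Type*} [AddGroup E] (g : E → ℝ)
    (hg : IsPosDefFnReal g) (h0 : g 0 = 1) (w y : E) (ε : ℝ) (hε : 0 ≤ ε)
    (hw : g w ≤ ε) (k : ℕ) (hy : (2 ^ k : ℕ) • y = w) :
    g y ≤ 1 - (1 - ε) / 4 ^ k :=
  pd_fn_iterated_halving_general g hg h0 w y ε hw k hy
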